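/- arXiv:2502.05804 — 3 statements merged into one kernel-verified Lean document; each statement's English description precedes it below -/
import Mathlib

section
/- Let 0 < q < 1 and let μ be a finite discrete Borel measure on S^{n-1} not concentrated on any closed hemisphere. For a compact convex set A ⊂ ℝⁿ with nonempty interior and a nonnegative continuous function f on S^{n-1} with f(u) ≥ h_A(u) on supp(μ), the function Φ(ξ) = ∫_{S^{n-1}} (f(u) − ξ·u)^q dμ(u), defined for ξ ∈ A, is strictly concave on A, and hence attains its supremum over A at a unique point ξ_f ∈ A. -/
open scoped RealInnerProductSpace

/-- For `0 < q < 1` and a discrete measure `μ = Σ α_k δ_{u_k}` on `S^{n-1}` not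
concentrated on any closed hemisphere, the functional
`Φ(ξ) = Σ_k α_k (f(u_k) − ξ·u_k)^q` is strictly concave on a convex body `A` with
`h_A ≤ f` on `supp μ`, and attains its supremum over `A` at a unique point. -/
theorem stmt4 {n N : ℕ} (q : ℝ) (hq0 : 0 < q) (hq1 : q < 1)
    (α : Fin N → ℝ) (hα : ∀ k, 0 < α k)
    (u : Fin N → EuclideanSpace ℝ (Fin n)) (hu : ∀ k, ‖u k‖ = 1)
    (hhemi : ∀ w : EuclideanSpace ℝ (Fin n), ‖w‖ = 1 → ∃ k, 0 < ⟪w, u k⟫)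
    (A : Set (EuclideanSpace ℝ (Fin n)))
    (hAconv : Convex ℝ A) (hAcomp : IsCompact A) (hAint : (interior A).Nonempty)
    (f : EuclideanSpace ℝ (Fin n) → ℝ) (hfcont : Continuous f) (hfnonneg : ∀ v, 0 ≤ f v)
    (hfA : ∀ k, sSup ((fun x => ⟪x, u k⟫) '' A) ≤ f (u k)) :
    StrictConcaveOn ℝ A (fun ξ => ∑ k, α k * (f (u k) - ⟪ξ, u k⟫) ^ q) ∧
      ∃! ξf, ξf ∈ A ∧ IsMaxOn (fun ξ => ∑ k, α k * (f (u k) - ⟪ξ, u k⟫) ^ q) A ξf := by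
  set Φ : EuclideanSpace ℝ (Fin n) → ℝ := fun ξ => ∑ k, α k * (f (u k) - ⟪ξ, u k⟫) ^ q with hΦ
  -- nonnegativity of the argument on A
  have hg : ∀ k, ∀ ξ ∈ A, 0 ≤ f (u k) - ⟪ξ, u k⟫ := by
    intro k ξ hξ
    have hbdd : BddAbove ((fun x => ⟪x, u k⟫) '' A) :=
      (hAcomp.image (continuous_id.inner continuous_const)).bddAbove
    have h1 : ⟪ξ, u k⟫ ≤ sSup ((fun x => ⟪x, u k⟫) '' A) :=
      le_csSup hbdd ⟨ξ, hξ, rfl⟩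
    linarith [hfA k]
  have hsc : StrictConcaveOn ℝ A Φ := by
    refine ⟨hAconv, fun x hx y hy hxy a b ha hb hab => ?_⟩
    -- find k with different inner products
    obtain ⟨k₀, hk₀⟩ := hhemi (‖x - y‖⁻¹ • (x - y)) (by
      rw [norm_smul, norm_inv, Real.norm_eq_abs, abs_of_nonneg (norm_nonneg _),
        inv_mul_cancel₀ (norm_ne_zero_iff.mpr (sub_ne_zero.mpr hxy))])
    have hk₀' : ⟪x, u k₀⟫ ≠ ⟪y, u k₀⟫ := by
      intro h
      rw [real_inner_smul_left, inner_sub_left, h, sub_self, mul_zero] at hk₀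
      exact lt_irrefl 0 hk₀
    have hmem : a • x + b • y ∈ A := hAconv hx hy ha.le hb.le hab
    have key : ∀ k, f (u k) - ⟪a • x + b • y, u k⟫
        = a * (f (u k) - ⟪x, u k⟫) + b * (f (u k) - ⟪y, u k⟫) := by
      intro k
      rw [inner_add_left, real_inner_smul_left, real_inner_smul_left]
      linear_combination (- f (u k)) * hab
    simp only [hΦ, smul_eq_mul, Finset.mul_sum]
    rw [← Finset.sum_add_distrib]
    apply Finset.sum_lt_sum
    · intro k _
      rw [key k]
      have := (Real.concaveOn_rpow hq0.le hq1.le).2 (Set.mem_Ici.mpr (hg k x hx))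
        (Set.mem_Ici.mpr (hg k y hy)) ha.le hb.le hab
      simp only [smul_eq_mul] at this
      nlinarith [(hα k).le, this]
    · refine ⟨k₀, Finset.mem_univ _, ?_⟩
      rw [key k₀]
      have hne : f (u k₀) - ⟪x, u k₀⟫ ≠ f (u k₀) - ⟪y, u k₀⟫ := by
        intro h; apply hk₀'; linarith
      have := (Real.strictConcaveOn_rpow hq0 hq1).2 (Set.mem_Ici.mpr (hg k₀ x hx))
        (Set.mem_Ici.mpr (hg k₀ y hy)) hne ha hb hab
      simp only [smul_eq_mul] at this
      nlinarith [hα k₀, this]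
  refine ⟨hsc, ?_⟩
  have hcont : Continuous Φ := by
    apply continuous_finset_sum
    intro k _
    exact continuous_const.mul ((Real.continuous_rpow_const hq0.le).comp
      (continuous_const.sub (continuous_id.inner continuous_const)))
  obtain ⟨ξ₀, hξ₀A, hmax⟩ := hAcomp.exists_isMaxOn
    (Set.nonempty_of_mem (interior_subset hAint.choose_spec)) hcont.continuousOn
  refine ⟨ξ₀, ⟨hξ₀A, hmax⟩, ?_⟩
  rintro ξ₁ ⟨hξ₁A, hmax₁⟩
  exact hsc.eq_of_isMaxOn hmax₁ hmax hξ₁A hξ₀A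
end

section
/- Let μ be a finite Borel measure on S^{n-1} not concentrated on any closed hemisphere, and let q > 0. Suppose {K_i} is a sequence of convex bodies containing the origin with ∫_{S^{n-1}} h_{K_i}(v)^q dμ(v) bounded above. Then the sequence {K_i} is uniformly bounded, i.e. there exists R > 0 with K_i ⊆ R·Bⁿ for all i. -/
open scoped RealInnerProductSpace
open MeasureTheory

noncomputable def suppFn {n : ℕ} (K : Set (EuclideanSpace ℝ (Fin n)))
    (v : EuclideanSpace ℝ (Fin n)) : ℝ :=
  sSup ((fun x => ⟪x, v⟫) '' K)

/-! If `x ∈ K` and `0 ∈ K`, then `h_K(v) ≥ max ⟪x, v⟫ 0`, so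
`∫ h_K^q dμ ≥ ∫ (max ⟪x, v⟫ 0)^q dμ = ‖x‖^q ∫ (max ⟪x / ‖x‖, v⟫ 0)^q dμ`.
The last integral is a continuous function of the direction `x / ‖x‖`, positive at every point
of the sphere because `μ` charges every open hemisphere; by compactness it is bounded below by
some `c > 0`, whence `‖x‖^q ≤ B / c` for every point of every `K i`. -/

section Hemisphere

variable {E : Type*} [NormedAddCommGroup E] [InnerProductSpace ℝ E] [MeasurableSpace E]
  {μ : Measure (Metric.sphere (0 : E) 1)} {q : ℝ}

lemma integral_max_inner_smul_rpow {r : ℝ} (hr : 0 ≤ r) (u : E) :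
    ∫ v, max ⟪r • u, (v : E)⟫ 0 ^ q ∂μ = r ^ q * ∫ v, max ⟪u, (v : E)⟫ 0 ^ q ∂μ := by
  rw [← integral_const_mul]
  congr 1 with v
  rw [real_inner_smul_left, ← Real.mul_rpow hr (le_max_right _ _), mul_max_of_nonneg _ _ hr,
    mul_zero]

variable [FiniteDimensional ℝ E] [BorelSpace E] [IsFiniteMeasure μ]

lemma continuous_integral_max_inner_rpow (hq : 0 ≤ q) :
    Continuous fun u : E => ∫ v, max ⟪u, (v : E)⟫ 0 ^ q ∂μ := by
  have h := continuous_parametric_integral_of_continuous (μ := μ) (s := Set.univ)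
    (f := fun (u : E) (v : Metric.sphere (0 : E) 1) => max ⟪u, (v : E)⟫ 0 ^ q)
    (by fun_prop) isCompact_univ
  simpa only [Measure.restrict_univ] using h

lemma integrable_max_inner_rpow (hq : 0 ≤ q) (u : E) :
    Integrable (fun v : Metric.sphere (0 : E) 1 => max ⟪u, (v : E)⟫ 0 ^ q) μ :=
  Continuous.integrable_of_hasCompactSupport (by fun_prop) (HasCompactSupport.of_compactSpace _)

lemma integral_max_inner_rpow_pos (hq : 0 < q) {u : E}
    (hu : 0 < μ {v | 0 < ⟪u, (v : E)⟫}) : 0 < ∫ v, max ⟪u, (v : E)⟫ 0 ^ q ∂μ := by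
  rw [integral_pos_iff_support_of_nonneg (fun v => by positivity)
    (integrable_max_inner_rpow hq.le u)]
  refine hu.trans_le (measure_mono fun v hv => ?_)
  exact (Real.rpow_pos_of_pos (lt_max_of_lt_left hv) q).ne'

lemma exists_pos_le_integral_max_inner_rpow
    (hμ : ∀ u : Metric.sphere (0 : E) 1, 0 < μ {v | 0 < ⟪(u : E), (v : E)⟫}) (hq : 0 < q) :
    ∃ c > 0, ∀ u ∈ Metric.sphere (0 : E) 1, c ≤ ∫ v, max ⟪u, (v : E)⟫ 0 ^ q ∂μ :=
  (isCompact_sphere 0 1).exists_forall_le' (continuous_integral_max_inner_rpow hq.le).continuousOn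
    fun u hu => integral_max_inner_rpow_pos hq (hμ ⟨u, hu⟩)

lemma exists_pos_mul_norm_rpow_le_integral_max_inner_rpow
    (hμ : ∀ u : Metric.sphere (0 : E) 1, 0 < μ {v | 0 < ⟪(u : E), (v : E)⟫}) (hq : 0 < q) :
    ∃ c > 0, ∀ y : E, c * ‖y‖ ^ q ≤ ∫ v, max ⟪y, (v : E)⟫ 0 ^ q ∂μ := by
  obtain ⟨c, hc, hcμ⟩ := exists_pos_le_integral_max_inner_rpow hμ hq
  refine ⟨c, hc, fun y => ?_⟩
  rcases eq_or_ne y 0 with rfl | hy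
  · rw [norm_zero, Real.zero_rpow hq.ne', mul_zero]
    exact integral_nonneg fun v => by positivity
  have hy' : ‖y‖ ≠ 0 := norm_ne_zero_iff.2 hy
  have hu : ‖y‖⁻¹ • y ∈ Metric.sphere (0 : E) 1 := by
    rw [mem_sphere_zero_iff_norm, norm_smul, norm_inv, norm_norm, inv_mul_cancel₀ hy']
  calc c * ‖y‖ ^ q = ‖y‖ ^ q * c := mul_comm _ _
    _ ≤ ‖y‖ ^ q * ∫ v, max ⟪‖y‖⁻¹ • y, (v : E)⟫ 0 ^ q ∂μ := by gcongr; exact hcμ _ hu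
    _ = ∫ v, max ⟪y, (v : E)⟫ 0 ^ q ∂μ := by
      rw [← integral_max_inner_smul_rpow (norm_nonneg y), smul_inv_smul₀ hy']

end Hemisphere

section SupportFunction

variable {n : ℕ} {K : Set (EuclideanSpace ℝ (Fin n))}

lemma inner_le_suppFn (hK : IsCompact K) {x : EuclideanSpace ℝ (Fin n)} (hx : x ∈ K)
    (v : EuclideanSpace ℝ (Fin n)) : ⟪x, v⟫ ≤ suppFn K v :=
  le_csSup ((hK.image (by fun_prop)).bddAbove) ⟨x, hx, rfl⟩

lemma max_inner_le_suppFn (hK : IsCompact K) (h0 : 0 ∈ K) {x : EuclideanSpace ℝ (Fin n)}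
    (hx : x ∈ K) (v : EuclideanSpace ℝ (Fin n)) : max ⟪x, v⟫ 0 ≤ suppFn K v :=
  max_le (inner_le_suppFn hK hx v) (by simpa using inner_le_suppFn hK h0 v)

lemma continuous_suppFn (hK : IsCompact K) : Continuous (suppFn K) :=
  hK.continuous_sSup (f := fun v x => ⟪x, v⟫) (by fun_prop)

lemma integral_max_inner_rpow_le_integral_suppFn_rpow
    {μ : Measure (Metric.sphere (0 : EuclideanSpace ℝ (Fin n)) 1)} [IsFiniteMeasure μ]
    {q : ℝ} (hq : 0 ≤ q) (hK : IsCompact K) (h0 : 0 ∈ K) {x : EuclideanSpace ℝ (Fin n)}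
    (hx : x ∈ K) :
    ∫ v, max ⟪x, (v : EuclideanSpace ℝ (Fin n))⟫ 0 ^ q ∂μ ≤
      ∫ v, suppFn K (v : EuclideanSpace ℝ (Fin n)) ^ q ∂μ := by
  refine integral_mono (integrable_max_inner_rpow hq x) ?_ fun v => ?_
  · have hcont := continuous_suppFn hK
    exact Continuous.integrable_of_hasCompactSupport (by fun_prop)
      (HasCompactSupport.of_compactSpace _)
  · exact Real.rpow_le_rpow (le_max_right _ _) (max_inner_le_suppFn hK h0 hx v) hq

end SupportFunction

theorem stmt6_general {n : ℕ}
    (μ : Measure (Metric.sphere (0 : EuclideanSpace ℝ (Fin n)) 1)) [IsFiniteMeasure μ]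
    (hμ : ∀ u : Metric.sphere (0 : EuclideanSpace ℝ (Fin n)) 1,
      0 < μ {v : Metric.sphere (0 : EuclideanSpace ℝ (Fin n)) 1 |
        0 < ⟪(u : EuclideanSpace ℝ (Fin n)), (v : EuclideanSpace ℝ (Fin n))⟫})
    (q : ℝ) (hq : 0 < q)
    (K : ℕ → Set (EuclideanSpace ℝ (Fin n)))
    (hcomp : ∀ i, IsCompact (K i))
    (h0 : ∀ i, (0 : EuclideanSpace ℝ (Fin n)) ∈ K i)
    (B : ℝ)
    (hB : ∀ i, ∫ v, suppFn (K i) (v : EuclideanSpace ℝ (Fin n)) ^ q ∂μ ≤ B) :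
    ∃ R > (0 : ℝ), ∀ i, K i ⊆ Metric.closedBall (0 : EuclideanSpace ℝ (Fin n)) R := by
  obtain ⟨c, hc, hcμ⟩ := exists_pos_mul_norm_rpow_le_integral_max_inner_rpow hμ hq
  refine ⟨max 1 ((B / c) ^ q⁻¹), by positivity, fun i x hx => ?_⟩
  have hxB : c * ‖x‖ ^ q ≤ B := calc
    c * ‖x‖ ^ q ≤ ∫ v, max ⟪x, (v : EuclideanSpace ℝ (Fin n))⟫ 0 ^ q ∂μ := hcμ x
    _ ≤ ∫ v, suppFn (K i) (v : EuclideanSpace ℝ (Fin n)) ^ q ∂μ :=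
      integral_max_inner_rpow_le_integral_suppFn_rpow hq.le (hcomp i) (h0 i) hx
    _ ≤ B := hB i
  have hBc : ‖x‖ ^ q ≤ B / c := by rwa [le_div_iff₀' hc]
  rw [mem_closedBall_zero_iff]
  exact le_max_of_le_right <| (Real.le_rpow_inv_iff_of_pos (norm_nonneg x)
    ((by positivity : 0 ≤ ‖x‖ ^ q).trans hBc) hq).2 hBc

/-- If `μ` is a finite measure on `S^{n-1}` not concentrated on any closed hemisphere,
`q > 0`, and `{K_i}` are convex bodies containing the origin with
`∫ h_{K_i}^q dμ` bounded above, then the `K_i` are uniformly bounded. -/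
theorem stmt6 {n : ℕ}
    (μ : Measure (Metric.sphere (0 : EuclideanSpace ℝ (Fin n)) 1)) [IsFiniteMeasure μ]
    (hμ : ∀ u : Metric.sphere (0 : EuclideanSpace ℝ (Fin n)) 1,
      0 < μ {v : Metric.sphere (0 : EuclideanSpace ℝ (Fin n)) 1 |
        0 < ⟪(u : EuclideanSpace ℝ (Fin n)), (v : EuclideanSpace ℝ (Fin n))⟫})
    (q : ℝ) (hq : 0 < q)
    (K : ℕ → Set (EuclideanSpace ℝ (Fin n)))
    (hconv : ∀ i, Convex ℝ (K i)) (hcomp : ∀ i, IsCompact (K i))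
    (hint : ∀ i, (interior (K i)).Nonempty)
    (h0 : ∀ i, (0 : EuclideanSpace ℝ (Fin n)) ∈ K i)
    (B : ℝ)
    (hB : ∀ i, ∫ v, suppFn (K i) (v : EuclideanSpace ℝ (Fin n)) ^ q ∂μ ≤ B) :
    ∃ R > (0 : ℝ), ∀ i, K i ⊆ Metric.closedBall (0 : EuclideanSpace ℝ (Fin n)) R :=
  stmt6_general μ hμ q hq K hcomp h0 B hB
end

section
/- Let 0 < q < 1, let μ be a finite discrete measure on S^{n-1} not concentrated on any closed hemisphere, let h ∈ C⁺(S^{n-1}) with Aleksandrov body [h]_μ containing the origin in its interior, and suppose the optimal translation point ξ_h = o (i.e. ξ = 0 maximizes ξ ↦ ∫ (h(u) − ξ·u)^q dμ(u) over [h]_μ). Then the first-order optimality condition ∫_{S^{n-1}} h(u)^{q−1} u dμ(u) = 0 holds. -/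
open scoped RealInnerProductSpace

/-! Fermat's rule: since every base `h(u_k)` is nonzero, `ξ ↦ Σ_k α_k (h(u_k) − ⟪ξ, u_k⟫)^q`
is differentiable at the interior maximum `0`, with derivative `−q ⟪Σ_k α_k h(u_k)^{q−1} u_k, ·⟫`,
which must vanish. -/

section

variable {E : Type*} [NormedAddCommGroup E] [InnerProductSpace ℝ E]

theorem hasFDerivAt_rpow_sub_inner {c q : ℝ} {u ξ : E} (hc : c - ⟪ξ, u⟫ ≠ 0) :
    HasFDerivAt (fun x : E => (c - ⟪x, u⟫) ^ q)
      (-(q * (c - ⟪ξ, u⟫) ^ (q - 1)) • innerSL ℝ u) ξ := by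
  have hlin : HasFDerivAt (fun x : E => c - ⟪x, u⟫) (-innerSL ℝ u) ξ := by
    simp_rw [real_inner_comm u]
    exact ((innerSL ℝ u).hasFDerivAt.const_sub c).congr_fderiv (by simp)
  have := (Real.hasDerivAt_rpow_const (p := q) (Or.inl hc)).comp_hasFDerivAt ξ hlin
  rwa [smul_neg, ← neg_smul] at this

theorem hasFDerivAt_sum_mul_rpow_sub_inner {ι : Type*} [Fintype ι] {α c : ι → ℝ} {u : ι → E}
    {q : ℝ} {ξ : E} (hc : ∀ k, c k - ⟪ξ, u k⟫ ≠ 0) :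
    HasFDerivAt (fun x : E => ∑ k, α k * (c k - ⟪x, u k⟫) ^ q)
      (-q • innerSL ℝ (∑ k, (α k * (c k - ⟪ξ, u k⟫) ^ (q - 1)) • u k)) ξ := by
  refine (HasFDerivAt.fun_sum (u := Finset.univ)
    fun k _ => (hasFDerivAt_rpow_sub_inner (q := q) (hc k)).const_mul (α k)).congr_fderiv ?_
  ext x
  simp only [_root_.sum_apply, _root_.smul_apply, smul_eq_mul,
    map_sum, map_smul, innerSL_apply_apply, Finset.mul_sum]
  exact Finset.sum_congr rfl fun k _ => by ring

theorem IsLocalMax.eq_zero_of_hasFDerivAt_innerSL {f : E → ℝ} {ξ v : E} (hf : IsLocalMax f ξ)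
    (hd : HasFDerivAt f (innerSL ℝ v) ξ) : v = 0 := by
  rw [← norm_eq_zero, ← innerSL_apply_norm ℝ, hf.hasFDerivAt_eq_zero hd, norm_zero]

end

theorem stmt14_general {n N : ℕ} (q : ℝ) (hq0 : 0 < q)
    (α : Fin N → ℝ)
    (u : Fin N → EuclideanSpace ℝ (Fin n))
    (h : EuclideanSpace ℝ (Fin n) → ℝ) (hhpos : ∀ k, 0 < h (u k))
    (A : Set (EuclideanSpace ℝ (Fin n)))
    (h0int : (0 : EuclideanSpace ℝ (Fin n)) ∈ interior A)
    (hmax : IsMaxOn (fun ξ : EuclideanSpace ℝ (Fin n) =>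
      ∑ k, α k * (h (u k) - ⟪ξ, u k⟫) ^ q) A 0) :
    ∑ k, (α k * h (u k) ^ (q - 1)) • u k = 0 := by
  have hloc := hmax.isLocalMax (mem_interior_iff_mem_nhds.mp h0int)
  have hder := hasFDerivAt_sum_mul_rpow_sub_inner (α := α) (c := fun k => h (u k)) (u := u)
    (q := q) (ξ := 0) fun k => by simpa using (hhpos k).ne'
  simp only [inner_zero_left, sub_zero, ← map_smul] at hder
  exact smul_eq_zero.mp (hloc.eq_zero_of_hasFDerivAt_innerSL hder) |>.resolve_left
    (neg_ne_zero.mpr hq0.ne')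

/-- First-order optimality: if `ξ = 0` lies in the interior of the Aleksandrov body
`[h]_μ` and maximizes `ξ ↦ Σ_k α_k (h(u_k) − ξ·u_k)^q` over `[h]_μ`, then
`Σ_k α_k h(u_k)^{q−1} u_k = 0`. -/
theorem stmt14 {n N : ℕ} (q : ℝ) (hq0 : 0 < q) (hq1 : q < 1)
    (α : Fin N → ℝ) (hα : ∀ k, 0 < α k)
    (u : Fin N → EuclideanSpace ℝ (Fin n)) (hu : ∀ k, ‖u k‖ = 1)
    (hhemi : ∀ w : EuclideanSpace ℝ (Fin n), ‖w‖ = 1 → ∃ k, 0 < ⟪w, u k⟫)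
    (h : EuclideanSpace ℝ (Fin n) → ℝ) (hh : Continuous h) (hhpos : ∀ k, 0 < h (u k))
    (A : Set (EuclideanSpace ℝ (Fin n)))
    (hA : A = {x : EuclideanSpace ℝ (Fin n) | ∀ k, ⟪x, u k⟫ ≤ h (u k)})
    (h0int : (0 : EuclideanSpace ℝ (Fin n)) ∈ interior A)
    (hmax : IsMaxOn (fun ξ : EuclideanSpace ℝ (Fin n) =>
      ∑ k, α k * (h (u k) - ⟪ξ, u k⟫) ^ q) A 0) :
    ∑ k, (α k * h (u k) ^ (q - 1)) • u k = 0 :=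
  stmt14_general q hq0 α u h hhpos A h0int hmax
end
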